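/- Every finitely presented group admits a finite triangular presentation: if G is a finitely presented group, then there exist a finite set S and a finite set R of elements of the free group on S, each of which is a product of exactly three letters from S and their inverses (i.e. each relator has word length three), such that G is isomorphic to the group presented by generators S and relators R. -/

import Mathlib

/-- `G` is finitely presented: it is isomorphic to some quotient of a finitely
generated free group by the normal closure of finitely many relators. -/
def IsFinitelyPresented (G : Type*) [Group G] : Prop :=
  ∃ (n : ℕ) (R : Finset (FreeGroup (Fin n))),
    Nonempty (G ≃* FreeGroup (Fin n) ⧸ Subgroup.normalClosure (R : Set (FreeGroup (Fin n))))

/-!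
Add a letter `p` and, for each relator `w = x₀ ⋯ x_{k-1}`, letters `c₀, …, c_k` with the relators
`c₀ p p` and `c_{j+1}⁻¹ c_j x_j`. Once `p = 1` these say that `c_j` is the prefix `x₀ ⋯ x_{j-1}`,
so the relator `c_k p p` is equivalent to `w`. All these words are reduced of length three, since
adjacent letters are distinct generators or equal with equal signs. The relators in `p` alone only
give `p³ = 1`; a second letter `y` with relators `p p y⁻¹` and `y p p` adds `p⁴ = 1`.
-/

open FreeGroup

theorem eq_one_of_pow_three_eq_one_of_pow_four_eq_one {M : Type*} [Monoid M] {p : M}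
    (h₃ : p ^ 3 = 1) (h₄ : p ^ 4 = 1) : p = 1 := by
  simpa using pow_gcd_eq_one.mpr ⟨h₃, h₄⟩

theorem FreeGroup.IsReduced.map_of_injective {α β : Type*} {f : α → β}
    (hf : Function.Injective f) {L : List (α × Bool)} (hL : IsReduced L) :
    IsReduced (L.map fun x => (f x.1, x.2)) :=
  List.isChain_map_of_isChain _ (fun _ _ h heq => h (hf heq)) hL

theorem FreeGroup.toWord_map_mk {α β : Type*} [DecidableEq β] {f : α → β}
    (hf : Function.Injective f) {L : List (α × Bool)} (hL : IsReduced L) :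
    (map f (mk L)).toWord = L.map fun x => (f x.1, x.2) := by
  rw [map.mk, toWord_mk, (hL.map_of_injective hf).reduce_eq]

theorem PresentedGroup.mk_mk {α : Type*} (rels : Set (FreeGroup α)) (L : List (α × Bool)) :
    PresentedGroup.mk rels (FreeGroup.mk L) =
      (L.map fun x => bif x.2 then PresentedGroup.of x.1 else (PresentedGroup.of x.1)⁻¹).prod := by
  rw [← lift_mk]
  congr 1
  ext
  rfl

namespace Triangulation

variable {α ι : Type*} (w : ι → List (α × Bool))

/-- `pad` and `padSq` are the letters `p` and `y`; `take i j` is the letter `c_j` of the relator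
`w i`, standing for its prefix `(w i).take j`. -/
inductive Gen
  | old (a : α)
  | pad
  | padSq
  | take (i : ι) (j : Fin ((w i).length + 1))

variable {w}

def Gen.toSum : Gen w → α ⊕ Option (Option (Σ i, Fin ((w i).length + 1)))
  | old a => .inl a
  | pad => .inr none
  | padSq => .inr (some none)
  | take i j => .inr (some (some ⟨i, j⟩))

theorem Gen.toSum_injective : Function.Injective (Gen.toSum (w := w)) := by
  rintro (_ | _ | _ | ⟨_, _⟩) (_ | _ | _ | ⟨_, _⟩) h <;> cases h <;> rfl

instance [Finite α] [Finite ι] : Finite (Gen w) :=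
  .of_injective _ Gen.toSum_injective

open Gen

inductive IsTriangle : List (Gen w × Bool) → Prop
  | cube : IsTriangle [(pad, true), (pad, true), (pad, true)]
  | padSq_right : IsTriangle [(pad, true), (pad, true), (padSq, false)]
  | padSq_left : IsTriangle [(padSq, true), (pad, true), (pad, true)]
  | start (i : ι) : IsTriangle [(take i 0, true), (pad, true), (pad, true)]
  | step (i : ι) (j : Fin (w i).length) :
      IsTriangle [(take i j.succ, false), (take i j.castSucc, true), (old (w i)[j].1, (w i)[j].2)]
  | finish (i : ι) : IsTriangle [(take i (Fin.last _), true), (pad, true), (pad, true)]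

theorem IsTriangle.isReduced {L : List (Gen w × Bool)} (hL : IsTriangle L) : IsReduced L := by
  cases hL <;> simp [isReduced_cons_cons, Fin.ext_iff]

theorem IsTriangle.length_eq {L : List (Gen w × Bool)} (hL : IsTriangle L) : L.length = 3 := by
  cases hL <;> rfl

variable (w) in
def rels : Set (FreeGroup (Gen w)) := mk '' {L | IsTriangle L}

theorem rels_finite [Finite α] [Finite ι] : (rels w).Finite :=
  ((List.finite_length_eq _ 3).subset fun _ hL => IsTriangle.length_eq hL).image _

theorem IsTriangle.prod_of_eq_one {L : List (Gen w × Bool)} (hL : IsTriangle L) :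
    (L.map fun x => bif x.2 then (PresentedGroup.of x.1 : PresentedGroup (rels w))
      else (PresentedGroup.of x.1)⁻¹).prod = 1 := by
  rw [← PresentedGroup.mk_mk]
  exact PresentedGroup.one_of_mem ⟨L, hL, rfl⟩

theorem of_padSq_eq_sq :
    (PresentedGroup.of padSq : PresentedGroup (rels w)) = PresentedGroup.of pad ^ 2 := by
  have h := (IsTriangle.padSq_right (w := w)).prod_of_eq_one
  simp only [List.map_cons, List.map_nil, List.prod_cons, List.prod_nil, mul_one, cond_true,
    cond_false, ← mul_assoc, mul_inv_eq_one] at h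
  rw [← h, sq]

theorem of_pad : (PresentedGroup.of pad : PresentedGroup (rels w)) = 1 := by
  have h₃ := (IsTriangle.cube (w := w)).prod_of_eq_one
  have h₄ := (IsTriangle.padSq_left (w := w)).prod_of_eq_one
  simp only [List.map_cons, List.map_nil, List.prod_cons, List.prod_nil, mul_one, cond_true,
    of_padSq_eq_sq, ← pow_two, ← pow_succ'] at h₃ h₄
  exact eq_one_of_pow_three_eq_one_of_pow_four_eq_one h₃ h₄

theorem of_padSq : (PresentedGroup.of padSq : PresentedGroup (rels w)) = 1 := by
  rw [of_padSq_eq_sq, of_pad, one_pow]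

variable (w) in
def embed : FreeGroup α →* PresentedGroup (rels w) :=
  FreeGroup.lift fun a => PresentedGroup.of (old a)

theorem of_take (i : ι) (j : Fin ((w i).length + 1)) :
    (PresentedGroup.of (take i j) : PresentedGroup (rels w)) = embed w (mk ((w i).take j)) := by
  induction j using Fin.induction with
  | zero => simpa [of_pad, ← one_eq_mk] using (IsTriangle.start (w := w) i).prod_of_eq_one
  | succ j ih =>
    have h := (IsTriangle.step i j).prod_of_eq_one
    simp only [List.map_cons, List.map_nil, List.prod_cons, List.prod_nil, mul_one, cond_true,
      cond_false, inv_mul_eq_one] at h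
    rw [h, ih, Fin.val_succ, ← List.take_concat_get' _ _ j.2, ← mul_mk, _root_.map_mul]
    simp [embed]

variable (w)

def toTriangulated : PresentedGroup (Set.range fun i => mk (w i)) →* PresentedGroup (rels w) :=
  PresentedGroup.toGroup (f := fun a => PresentedGroup.of (old a)) <| by
    rintro _ ⟨i, rfl⟩
    have h := (IsTriangle.finish (w := w) i).prod_of_eq_one
    have hlast := of_take (w := w) i (Fin.last _)
    rw [Fin.val_last, List.take_length] at hlast
    change embed w (mk (w i)) = 1
    simpa [of_pad, hlast] using h

def eval : Gen w → PresentedGroup (Set.range fun i => mk (w i))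
  | old a => .of a
  | pad => 1
  | padSq => 1
  | take i j => PresentedGroup.mk _ (mk ((w i).take j))

def ofTriangulated : PresentedGroup (rels w) →* PresentedGroup (Set.range fun i => mk (w i)) :=
  PresentedGroup.toGroup (f := eval w) <| by
    rintro _ ⟨L, hL, rfl⟩
    rw [lift_mk]
    cases hL with
    | step i j =>
      simp only [List.map_cons, List.map_nil, List.prod_cons, List.prod_nil, mul_one, cond_true,
        cond_false, inv_mul_eq_one, eval, Fin.val_succ, Fin.val_castSucc]
      rw [← List.take_concat_get' _ _ j.2, ← mul_mk, _root_.map_mul]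
      simp [PresentedGroup.mk_mk]
    | finish i =>
      simpa [eval] using PresentedGroup.one_of_mem (rels := Set.range fun i => mk (w i)) ⟨i, rfl⟩
    | _ => simp [eval, ← one_eq_mk]

def mulEquiv : PresentedGroup (Set.range fun i => mk (w i)) ≃* PresentedGroup (rels w) :=
  MonoidHom.toMulEquiv (toTriangulated w) (ofTriangulated w)
    (PresentedGroup.ext fun a => by simp [toTriangulated, ofTriangulated, eval])
    (PresentedGroup.ext fun x => by
      cases x with
      | old a => simp [toTriangulated, ofTriangulated, eval]
      | pad => simp [ofTriangulated, of_pad]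
      | padSq => simp [ofTriangulated, of_padSq]
      | take i j =>
        simp only [MonoidHom.comp_apply, MonoidHom.id_apply, ofTriangulated,
          PresentedGroup.toGroup.of, eval]
        exact (of_take i j).symm)

end Triangulation

theorem exists_triangular_presentation_of_finite {α : Type*} [Finite α] {R : Set (FreeGroup α)}
    (hR : R.Finite) :
    ∃ (n : ℕ) (T : Finset (FreeGroup (Fin n))), (∀ r ∈ T, r.toWord.length = 3) ∧
      Nonempty (PresentedGroup R ≃* PresentedGroup (T : Set (FreeGroup (Fin n)))) := by
  classical
  have : Finite R := hR
  let w : R → List (α × Bool) := fun r => r.1.toWord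
  have hw : R = Set.range fun r => mk (w r) := by
    simp only [w, mk_toWord]
    exact Subtype.range_coe.symm
  let e := Finite.equivFin (Triangulation.Gen w)
  refine ⟨_, (Triangulation.rels_finite.image (freeGroupCongr e)).toFinset, ?_, ?_⟩
  · simp only [Set.Finite.mem_toFinset]
    rintro _ ⟨_, ⟨L, hL, rfl⟩, rfl⟩
    rw [freeGroupCongr_apply, toWord_map_mk e.injective hL.isReduced, List.length_map,
      hL.length_eq]
  · rw [Set.Finite.coe_toFinset]
    exact ⟨(QuotientGroup.quotientMulEquivOfEq (congrArg Subgroup.normalClosure hw)).trans <|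
      (Triangulation.mulEquiv w).trans (PresentedGroup.equivPresentedGroup _ e)⟩

/-- **Lemma (Manning, Section 2.1).** Every finitely presented group admits a
finite triangular presentation: one in which every relator has word length exactly
three. -/
theorem exists_triangular_presentation
    {G : Type*} [Group G] (h : IsFinitelyPresented G) :
    ∃ (n : ℕ) (R : Finset (FreeGroup (Fin n))),
      (∀ r ∈ R, (FreeGroup.toWord r).length = 3) ∧
      Nonempty (G ≃* FreeGroup (Fin n) ⧸
        Subgroup.normalClosure (R : Set (FreeGroup (Fin n)))) := by
  obtain ⟨n, R, ⟨e⟩⟩ := h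
  obtain ⟨m, T, hT, ⟨e'⟩⟩ := exists_triangular_presentation_of_finite R.finite_toSet
  exact ⟨m, T, hT, ⟨e.trans e'⟩⟩
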